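/- arXiv:1711.00581 — 2 statements merged into one kernel-verified Lean document; each statement's English description precedes it below -/
import Mathlib

section
/- Let f₁, ω₁, ω₂ be positive reals and f₂ a real random variable with CDF G. Define the overlap v = max(0, min(f₁+ω₁/2, f₂+ω₂/2) − max(f₁−ω₁/2, f₂−ω₂/2)). Then for 0 ≤ x < min(ω₁, ω₂), P(v ≤ x) = 1 − G(f₁ + (ω₁+ω₂)/2 − x) + G(f₁ − (ω₁+ω₂)/2 + x), provided G is continuous. -/
/-!
The overlap of the two bands is at most `x` exactly when the centre `f₂` lies at distance at
least `(ω₁ + ω₂) / 2 - x` from `f₁`: when one band contains the other the overlap is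
`min ω₁ ω₂ > x`. So `P(v ≤ x) = P(f₂ ≤ b) + P(f₂ ≥ a)` with `b < a`, and continuity of
the CDF of `f₂` turns `P(f₂ ≥ a) = 1 - P(f₂ < a)` into `1 - G a`.
-/

open MeasureTheory ProbabilityTheory Set

lemma overlap_le_iff {c₁ c₂ w₁ w₂ x : ℝ} (hx0 : 0 ≤ x) (hx₁ : x < w₁) (hx₂ : x < w₂) :
    max 0 (min (c₁ + w₁ / 2) (c₂ + w₂ / 2) - max (c₁ - w₁ / 2) (c₂ - w₂ / 2)) ≤ x ↔
      c₂ ≤ c₁ - (w₁ + w₂) / 2 + x ∨ c₁ + (w₁ + w₂) / 2 - x ≤ c₂ := by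
  grind

lemma measure_Iio_eq_ofReal_cdf {ν : Measure ℝ} [IsProbabilityMeasure ν] {a : ℝ}
    (h : ContinuousWithinAt (cdf ν) (Iio a) a) : ν (Iio a) = ENNReal.ofReal (cdf ν a) := by
  conv_lhs => rw [← measure_cdf ν]
  rw [StieltjesFunction.measure_Iio _ (tendsto_cdf_atBot ν),
    (monotone_cdf ν).continuousWithinAt_Iio_iff_leftLim_eq.1 h, sub_zero]

lemma measureReal_Iic_union_Ici {ν : Measure ℝ} [IsProbabilityMeasure ν] {a b : ℝ} (hba : b < a)
    (ha : ContinuousWithinAt (cdf ν) (Iio a) a) :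
    ν.real (Iic b ∪ Ici a) = 1 - cdf ν a + cdf ν b := by
  have hIci : ν.real (Ici a) = 1 - cdf ν a := by
    rw [← compl_Iio, probReal_compl_eq_one_sub measurableSet_Iio, measureReal_def,
      measure_Iio_eq_ofReal_cdf ha, ENNReal.toReal_ofReal (cdf_nonneg ν a)]
  rw [measureReal_union (Iic_disjoint_Ici.2 hba.not_ge) measurableSet_Ici, hIci, cdf_eq_real ν b]
  ring

theorem overlap_cdf_general {Ω : Type*} [MeasurableSpace Ω]
    (μ : Measure Ω) [IsProbabilityMeasure μ]
    (f₂ : Ω → ℝ) (hf : Measurable f₂)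
    (f₁ ω₁ ω₂ : ℝ)
    (G : ℝ → ℝ) (hG : ∀ x, G x = (μ {ω | f₂ ω ≤ x}).toReal)
    (hGcont : Continuous G)
    (v : Ω → ℝ)
    (hv : ∀ ω, v ω = max 0 (min (f₁ + ω₁ / 2) (f₂ ω + ω₂ / 2)
        - max (f₁ - ω₁ / 2) (f₂ ω - ω₂ / 2)))
    (x : ℝ) (hx0 : 0 ≤ x) (hx : x < min ω₁ ω₂) :
    (μ {ω | v ω ≤ x}).toReal
      = 1 - G (f₁ + (ω₁ + ω₂) / 2 - x) + G (f₁ - (ω₁ + ω₂) / 2 + x) := by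
  obtain ⟨hx₁, hx₂⟩ := lt_min_iff.1 hx
  have : IsProbabilityMeasure (μ.map f₂) := Measure.isProbabilityMeasure_map hf.aemeasurable
  have hcdf : cdf (μ.map f₂) = G := by
    ext t
    rw [cdf_eq_real, map_measureReal_apply hf measurableSet_Iic, hG, measureReal_def]
    rfl
  have hset : {ω | v ω ≤ x} =
      f₂ ⁻¹' (Iic (f₁ - (ω₁ + ω₂) / 2 + x) ∪ Ici (f₁ + (ω₁ + ω₂) / 2 - x)) := by
    ext ω
    simp only [mem_ofPred_eq, hv, overlap_le_iff hx0 hx₁ hx₂, mem_preimage, mem_union, mem_Iic,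
      mem_Ici]
  rw [← measureReal_def, hset,
    ← map_measureReal_apply hf (measurableSet_Iic.union measurableSet_Ici),
    measureReal_Iic_union_Ici (by linarith) (hcdf ▸ hGcont.continuousWithinAt), hcdf]

/-- CDF of the frequency-overlap random variable v. -/
theorem overlap_cdf {Ω : Type*} [MeasurableSpace Ω]
    (μ : Measure Ω) [IsProbabilityMeasure μ]
    (f₂ : Ω → ℝ) (hf : Measurable f₂)
    (f₁ ω₁ ω₂ : ℝ) (hf₁ : 0 < f₁) (hω₁ : 0 < ω₁) (hω₂ : 0 < ω₂)
    (G : ℝ → ℝ) (hG : ∀ x, G x = (μ {ω | f₂ ω ≤ x}).toReal)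
    (hGcont : Continuous G)
    (v : Ω → ℝ)
    (hv : ∀ ω, v ω = max 0 (min (f₁ + ω₁ / 2) (f₂ ω + ω₂ / 2)
        - max (f₁ - ω₁ / 2) (f₂ ω - ω₂ / 2)))
    (x : ℝ) (hx0 : 0 ≤ x) (hx : x < min ω₁ ω₂) :
    (μ {ω | v ω ≤ x}).toReal
      = 1 - G (f₁ + (ω₁ + ω₂) / 2 - x) + G (f₁ - (ω₁ + ω₂) / 2 + x) :=
  overlap_cdf_general μ f₂ hf f₁ ω₁ ω₂ G hG hGcont v hv x hx0 hx
end

section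
/- With the setup of the overlap random variable v, if f₂ is uniformly distributed on [a, b] with a < f₁ − (ω₁+ω₂)/2 and b > f₁ + (ω₁+ω₂)/2, and ω₂ ≤ ω₁, then E[v]/ω₁ = ω₂/(b − a). -/
/-!
The overlap `v t` is the length of the `t`-slice of the strip
`S = {(t, x) | x ∈ [f₁ - ω₁/2, f₁ + ω₁/2], x - t ∈ [-ω₂/2, ω₂/2]}`, while every `x`-slice of `S`
with `x` in the fixed interval has length `ω₂`. By Tonelli, `∫ v = ω₁ ω₂`; since `v` vanishes
outside `[a, b]`, the integral over `[a, b]` is the same.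
-/

open MeasureTheory Set

theorem volume_Icc_inter_Icc (p q r s : ℝ) :
    volume (Icc p q ∩ Icc r s) = ENNReal.ofReal (min q s - max p r) := by
  rw [Icc_inter_Icc, Real.volume_Icc]

theorem lintegral_volume_Icc_inter_Icc_add (p q r s : ℝ) :
    ∫⁻ t, volume (Icc p q ∩ Icc (t + r) (t + s)) = volume (Icc p q) * volume (Icc r s) := by
  set S : Set (ℝ × ℝ) := {z | z.2 ∈ Icc p q ∧ z.2 - z.1 ∈ Icc r s}
  have hS : MeasurableSet S :=
    ((isClosed_Icc.preimage continuous_snd).inter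
      (isClosed_Icc.preimage (continuous_snd.sub continuous_fst))).measurableSet
  have slice_fst (t : ℝ) : Prod.mk t ⁻¹' S = Icc p q ∩ Icc (t + r) (t + s) := by
    ext x
    simp only [S, mem_preimage, mem_ofPred_eq, mem_inter_iff, mem_Icc]
    constructor <;> rintro ⟨hx, _, _⟩ <;> exact ⟨hx, by linarith, by linarith⟩
  have slice_snd (x : ℝ) : volume ((fun t => (t, x)) ⁻¹' S) =
      (Icc p q).indicator (fun _ => volume (Icc r s)) x := by
    by_cases hx : x ∈ Icc p q
    · have : (fun t => (t, x)) ⁻¹' S = Icc (x - s) (x - r) := by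
        ext t
        simp only [S, mem_preimage, mem_ofPred_eq, hx, true_and]
        simp only [mem_Icc]
        constructor <;> rintro ⟨_, _⟩ <;> constructor <;> linarith
      rw [this, indicator_of_mem hx, Real.volume_Icc, Real.volume_Icc, sub_sub_sub_cancel_left]
    · have : (fun t => (t, x)) ⁻¹' S = ∅ := eq_empty_of_forall_notMem fun _ ht => hx ht.1
      rw [this, indicator_of_notMem hx, measure_empty]
  calc ∫⁻ t, volume (Icc p q ∩ Icc (t + r) (t + s))
      = (volume.prod volume : Measure (ℝ × ℝ)) S := by
        simp only [Measure.prod_apply hS, slice_fst]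
    _ = volume (Icc p q) * volume (Icc r s) := by
        rw [Measure.prod_apply_symm hS, lintegral_congr slice_snd,
          lintegral_indicator_const measurableSet_Icc, mul_comm]

theorem integral_overlap_length {p q r s : ℝ} (hpq : p ≤ q) (hrs : r ≤ s) :
    ∫ t, max 0 (min q (t + s) - max p (t + r)) = (q - p) * (s - r) := by
  have hlen (t : ℝ) : max 0 (min q (t + s) - max p (t + r)) =
      (volume (Icc p q ∩ Icc (t + r) (t + s))).toReal := by
    rw [volume_Icc_inter_Icc, ENNReal.toReal_ofReal', max_comm]
  simp only [hlen]
  rw [integral_toReal, lintegral_volume_Icc_inter_Icc_add, Real.volume_Icc, Real.volume_Icc,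
    ENNReal.toReal_mul, ENNReal.toReal_ofReal (sub_nonneg.2 hpq),
    ENNReal.toReal_ofReal (sub_nonneg.2 hrs)]
  · simp only [volume_Icc_inter_Icc]
    fun_prop
  · exact Filter.Eventually.of_forall fun t => measure_lt_top_of_subset inter_subset_left
      (by simp [Real.volume_Icc])

theorem overlap_length_eq_zero {p q r s t : ℝ} (ht : t + s ≤ p ∨ q ≤ t + r) :
    max 0 (min q (t + s) - max p (t + r)) = 0 := by
  refine max_eq_left ?_
  rcases ht with ht | ht
  · linarith [min_le_right q (t + s), le_max_left p (t + r)]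
  · linarith [min_le_left q (t + s), le_max_right p (t + r)]

theorem intervalIntegral_overlap_length {p q r s a b : ℝ} (hpq : p ≤ q) (hrs : r ≤ s)
    (ha : a ≤ p - s) (hb : q - r ≤ b) :
    ∫ t in a..b, max 0 (min q (t + s) - max p (t + r)) = (q - p) * (s - r) := by
  rw [intervalIntegral.integral_of_le (by linarith), ← integral_overlap_length hpq hrs]
  refine setIntegral_eq_integral_of_forall_compl_eq_zero fun t ht => overlap_length_eq_zero ?_
  rw [mem_Ioc, not_and_or, not_lt, not_le] at ht
  rcases ht with ht | ht
  · left; linarith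
  · right; linarith

theorem expected_overlap_uniform_general
    (f₁ ω₁ ω₂ a b : ℝ) (hω₁ : 0 < ω₁) (hω₂ : 0 < ω₂)
    (ha : a < f₁ - (ω₁ + ω₂) / 2) (hb : f₁ + (ω₁ + ω₂) / 2 < b)
    (v : ℝ → ℝ)
    (hv : ∀ t, v t = max 0 (min (f₁ + ω₁ / 2) (t + ω₂ / 2)
        - max (f₁ - ω₁ / 2) (t - ω₂ / 2))) :
    ((b - a)⁻¹ * ∫ t in a..b, v t) / ω₁ = ω₂ / (b - a) := by
  have hintegral : ∫ t in a..b, v t = ω₁ * ω₂ := by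
    simp only [hv, sub_eq_add_neg _ (ω₂ / 2)]
    rw [intervalIntegral_overlap_length (by linarith) (by linarith) (by linarith) (by linarith)]
    ring
  have hab : b - a ≠ 0 := by linarith
  rw [hintegral]
  field_simp

/-- Expected normalized overlap for f₂ ~ Uniform[a,b] enclosing the overlap window. -/
theorem expected_overlap_uniform
    (f₁ ω₁ ω₂ a b : ℝ) (hf₁ : 0 < f₁) (hω₁ : 0 < ω₁) (hω₂ : 0 < ω₂)
    (hω : ω₂ ≤ ω₁)
    (ha : a < f₁ - (ω₁ + ω₂) / 2) (hb : f₁ + (ω₁ + ω₂) / 2 < b)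
    (v : ℝ → ℝ)
    (hv : ∀ t, v t = max 0 (min (f₁ + ω₁ / 2) (t + ω₂ / 2)
        - max (f₁ - ω₁ / 2) (t - ω₂ / 2))) :
    ((b - a)⁻¹ * ∫ t in a..b, v t) / ω₁ = ω₂ / (b - a) :=
  expected_overlap_uniform_general f₁ ω₁ ω₂ a b hω₁ hω₂ ha hb v hv
end
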